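/- arXiv:2205.03937 — 2 statements merged into one kernel-verified Lean document; each statement's English description precedes it below -/
import Mathlib

section
/- Consider the discrete-time Markov chain on {0,1,...,N} (the accelerated discretised 2-CGP) with transition probabilities: from 0, jump to 1 with probability 1; from 1 ≤ i ≤ N−1, jump to i−1 with probability (2/(i+2))(1−e^{−(i+2)ε}), stay at i with probability e^{−(i+2)ε}, and jump to i+1 or to any j with 0 ≤ j ≤ i−2 each with probability (1/(i+2))(1−e^{−(i+2)ε}); from N, jump to N−1 with probability (2/(N+2))(1−e^{−(N+2)ε}), to any j with 0 ≤ j ≤ N−2 with probability (1/(N+2))(1−e^{−(N+2)ε}), and stay at N otherwise. Define (A_i) backwards by A_N = 1, A_{N−1} = N+1, A_{N−2} = (N+1)A_{N−1} − 2A_N, A_{i−1} = (i+2)A_i − 2A_{i+1} − Σ_{j=i+2}^{N} A_j for 2 ≤ i ≤ N−2, and A_0 = (1/2)(2A_1 + Σ_{j=2}^N A_j)(1−e^{−2ε}). Then the invariant distribution (p̃_i) satisfies p̃_i = p̃_N · A_i · ((i+2)/(N+2)) · (1−e^{−(N+2)ε})/(1−e^{−(i+2)ε}) for all 0 ≤ i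 ≤ N. -/
open Real Finset

/-- Transition probabilities of the accelerated discretised 2-CGP on `{0, …, N}` with time step
`ε`: from `0` jump to `1` with probability `1`; from `1 ≤ i ≤ N-1` jump to `i-1` with probability
`(2/(i+2))(1-e^{-(i+2)ε})`, stay at `i` with probability `e^{-(i+2)ε}`, and jump to `i+1` or to
any `0 ≤ j ≤ i-2`, each with probability `(1/(i+2))(1-e^{-(i+2)ε})`; from `N` jump to `N-1` with
probability `(2/(N+2))(1-e^{-(N+2)ε})`, to any `0 ≤ j ≤ N-2` with probability
`(1/(N+2))(1-e^{-(N+2)ε})`, and stay at `N` otherwise. -/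
noncomputable def accP (N : ℕ) (ε : ℝ) (i j : ℕ) : ℝ :=
  if i = 0 then (if j = 1 then 1 else 0)
  else if i < N then
    (if j + 1 = i then 2 / ((i : ℝ) + 2) * (1 - Real.exp (-((i : ℝ) + 2) * ε))
     else if j = i then Real.exp (-((i : ℝ) + 2) * ε)
     else if j = i + 1 ∨ j + 2 ≤ i then
       1 / ((i : ℝ) + 2) * (1 - Real.exp (-((i : ℝ) + 2) * ε))
     else 0)
  else if i = N then
    (if j + 1 = N then 2 / ((N : ℝ) + 2) * (1 - Real.exp (-((N : ℝ) + 2) * ε))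
     else if j + 2 ≤ N then 1 / ((N : ℝ) + 2) * (1 - Real.exp (-((N : ℝ) + 2) * ε))
     else if j = N then 1 - ((N : ℝ) + 1) / ((N : ℝ) + 2) * (1 - Real.exp (-((N : ℝ) + 2) * ε))
     else 0)
  else 0

lemma stmt11_sum_split3 (f : ℕ → ℝ) (a b c : ℕ) (h1 : a ≤ b) (h2 : b ≤ c) :
    ∑ i ∈ Finset.range c, f i = (∑ i ∈ Finset.Ico 0 a, f i) +
      (∑ i ∈ Finset.Ico a b, f i) + ∑ i ∈ Finset.Ico b c, f i := by
  rw [Finset.range_eq_Ico, ← Finset.sum_Ico_consecutive f (Nat.zero_le a) (h1.trans h2),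
    ← Finset.sum_Ico_consecutive f h1 h2, add_assoc]

lemma stmt11_sum_Ico_two (f : ℕ → ℝ) (m : ℕ) :
    ∑ i ∈ Finset.Ico m (m+2), f i = f m + f (m+1) := by
  have h : Finset.Ico m (m+2) = {m, m+1} := by
    ext a; simp only [Finset.mem_Ico, Finset.mem_insert, Finset.mem_singleton]; omega
  rw [h, Finset.sum_insert (by simp), Finset.sum_singleton]

lemma stmt11_sum_Ico_three (f : ℕ → ℝ) (m : ℕ) :
    ∑ i ∈ Finset.Ico m (m+3), f i = f m + f (m+1) + f (m+2) := by
  have h : Finset.Ico m (m+3) = {m, m+1, m+2} := by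
    ext a; simp only [Finset.mem_Ico, Finset.mem_insert, Finset.mem_singleton]; omega
  rw [h, Finset.sum_insert (by simp), Finset.sum_insert (by simp), Finset.sum_singleton,
    add_assoc]

/-- With `(A_i)` defined backwards by `A_N = 1`, `A_{N-1} = N+1`,
`A_{N-2} = (N+1)A_{N-1} - 2A_N`, `A_{i-1} = (i+2)A_i - 2A_{i+1} - ∑_{j=i+2}^N A_j` for
`2 ≤ i ≤ N-2`, and `A_0 = (1/2)(2A_1 + ∑_{j=2}^N A_j)(1-e^{-2ε})`, the invariant distribution
`(p̃_i)` of the accelerated discretised 2-CGP satisfies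
`p̃_i = p̃_N · A_i · ((i+2)/(N+2)) · (1-e^{-(N+2)ε})/(1-e^{-(i+2)ε})` for all `0 ≤ i ≤ N`. -/
theorem stmt11 (N : ℕ) (hN : 2 ≤ N) (ε : ℝ) (hε : 0 < ε)
    (A : ℕ → ℝ)
    (hAN : A N = 1)
    (hAN1 : A (N - 1) = (N : ℝ) + 1)
    (hAN2 : A (N - 2) = ((N : ℝ) + 1) * A (N - 1) - 2 * A N)
    (hArec : ∀ i : ℕ, 2 ≤ i → i ≤ N - 2 →
      A (i - 1) = ((i : ℝ) + 2) * A i - 2 * A (i + 1) - ∑ j ∈ Finset.Icc (i + 2) N, A j)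
    (hA0 : A 0 = (1 / 2) * (2 * A 1 + ∑ j ∈ Finset.Icc 2 N, A j) * (1 - Real.exp (-2 * ε)))
    (p : ℕ → ℝ)
    (hp_nonneg : ∀ i, 0 ≤ p i)
    (hp_sum : ∑ i ∈ Finset.range (N + 1), p i = 1)
    (hp_inv : ∀ j ≤ N, p j = ∑ i ∈ Finset.range (N + 1), p i * accP N ε i j) :
    ∀ i ≤ N, p i = p N * A i * (((i : ℝ) + 2) / ((N : ℝ) + 2)) *
      ((1 - Real.exp (-((N : ℝ) + 2) * ε)) / (1 - Real.exp (-((i : ℝ) + 2) * ε))) := by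
  have he : ∀ i : ℕ, 0 < 1 - Real.exp (-((i:ℝ)+2)*ε) := by
    intro i
    have h1 : Real.exp (-((i:ℝ)+2)*ε) < 1 := by
      apply Real.exp_lt_one_iff.mpr
      have : (0:ℝ) < (i:ℝ)+2 := by positivity
      nlinarith
    linarith
  rcases Nat.lt_or_ge N 3 with h3 | h3
  · -- N = 2 : hypotheses are contradictory
    have hN2 : N = 2 := by omega
    subst hN2
    exfalso
    norm_num at hAN1 hAN2
    rw [Finset.Icc_self, Finset.sum_singleton] at hA0
    have hexp2 : Real.exp (-2*ε) < 1 := by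
      apply Real.exp_lt_one_iff.mpr; linarith
    have hpos : 0 < Real.exp (-2*ε) := Real.exp_pos _
    rw [hAN, hAN1] at hAN2 hA0
    nlinarith [hAN2, hA0]
  · obtain ⟨n, rfl⟩ : ∃ n, N = n + 3 := ⟨N - 3, by omega⟩
    obtain ⟨x, hxdef⟩ : ∃ x : ℕ → ℝ,
        ∀ i, x i = p i * (1 - Real.exp (-((i:ℝ)+2)*ε)) / ((i:ℝ)+2) := ⟨_, fun i => rfl⟩
    -- accP evaluations
    have hacc_zero : ∀ j i : ℕ, 1 ≤ j → i + 2 ≤ j → j ≤ n + 3 →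
        accP (n+3) ε i j = 0 := by
      intro j i hj hij hjN
      unfold accP
      rcases Nat.eq_zero_or_pos i with h0 | h0
      · subst h0
        rw [if_pos rfl, if_neg (by omega)]
      · rw [if_neg (by omega), if_pos (by omega), if_neg (by omega), if_neg (by omega),
          if_neg (by omega)]
    have hacc_tail : ∀ j i : ℕ, j + 2 ≤ i → i ≤ n + 3 →
        p i * accP (n+3) ε i j = x i := by
      intro j i h1 h2
      rcases eq_or_lt_of_le h2 with h | h
      · rw [h, hxdef]
        unfold accP
        rw [if_neg (by omega), if_neg (by omega), if_pos rfl, if_neg (by omega),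
          if_pos (by omega)]
        ring
      · rw [hxdef]
        unfold accP
        rw [if_neg (by omega), if_pos h, if_neg (by omega), if_neg (by omega),
          if_pos (Or.inr h1)]
        ring
    have hacc_self : ∀ i : ℕ, 1 ≤ i → i ≤ n + 2 →
        accP (n+3) ε i i = Real.exp (-((i:ℝ)+2)*ε) := by
      intro i h1 h2
      unfold accP
      rw [if_neg (by omega), if_pos (by omega), if_neg (by omega), if_pos rfl]
    have hacc_up : ∀ j : ℕ, 1 ≤ j → j ≤ n + 2 →
        p j * accP (n+3) ε j (j+1) = x j := by
      intro j h1 h2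
      rw [hxdef]
      unfold accP
      rw [if_neg (by omega), if_pos (by omega), if_neg (by omega), if_neg (by omega),
        if_pos (Or.inl rfl)]
      ring
    have hacc_down : ∀ j : ℕ, j ≤ n + 2 →
        p (j+1) * accP (n+3) ε (j+1) j = 2 * x (j+1) := by
      intro j hj
      rcases eq_or_lt_of_le (show j + 1 ≤ n + 3 by omega) with h | h
      · rw [h, hxdef]
        unfold accP
        rw [if_neg (by omega), if_neg (by omega), if_pos rfl, if_pos h]
        ring
      · rw [hxdef]
        unfold accP
        rw [if_neg (by omega), if_pos h, if_pos rfl]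
        ring
    -- balance at N
    have hbalN : p (n+3) = x (n+2) + p (n+3) *
        (1 - (((n+3:ℕ):ℝ)+1)/(((n+3:ℕ):ℝ)+2) * (1 - Real.exp (-(((n+3:ℕ):ℝ)+2)*ε))) := by
      have h := hp_inv (n+3) (le_refl _)
      have hsplit := stmt11_sum_split3 (fun i => p i * accP (n+3) ε i (n+3)) (n+2) (n+4) (n+4)
        (by omega) (le_refl _)
      rw [Finset.Ico_self, Finset.sum_empty] at hsplit
      have htwo : ∑ i ∈ Finset.Ico (n+2) (n+4), p i * accP (n+3) ε i (n+3)
          = p (n+2) * accP (n+3) ε (n+2) (n+3) + p (n+3) * accP (n+3) ε (n+3) (n+3) :=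
        stmt11_sum_Ico_two _ (n+2)
      have hz : ∑ i ∈ Finset.Ico 0 (n+2), p i * accP (n+3) ε i (n+3) = 0 := by
        apply Finset.sum_eq_zero
        intro i hi
        simp only [Finset.mem_Ico] at hi
        rw [hacc_zero (n+3) i (by omega) (by omega) (by omega), mul_zero]
      have hf2 : p (n+2) * accP (n+3) ε (n+2) (n+3) = x (n+2) :=
        hacc_up (n+2) (by omega) (by omega)
      have hf3 : accP (n+3) ε (n+3) (n+3)
          = 1 - (((n+3:ℕ):ℝ)+1)/(((n+3:ℕ):ℝ)+2) * (1 - Real.exp (-(((n+3:ℕ):ℝ)+2)*ε)) := by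
        unfold accP
        rw [if_neg (by omega), if_neg (by omega), if_pos rfl, if_neg (by omega),
          if_neg (by omega), if_pos rfl]
      rw [hsplit, hz, htwo, hf2, hf3] at h
      linarith [h]
    -- balance in the middle
    have hbal : ∀ m : ℕ, 1 ≤ m → m ≤ n + 1 →
        x m = ((m:ℝ)+3) * x (m+1) - 2 * x (m+2) - ∑ i ∈ Finset.Ico (m+3) (n+4), x i := by
      intro m hm1 hm2
      have h := hp_inv (m+1) (by omega)
      have hsplit := stmt11_sum_split3 (fun i => p i * accP (n+3) ε i (m+1)) m (m+3) (n+4)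
        (by omega) (by omega)
      have hthree : ∑ i ∈ Finset.Ico m (m+3), p i * accP (n+3) ε i (m+1)
          = p m * accP (n+3) ε m (m+1) + p (m+1) * accP (n+3) ε (m+1) (m+1)
            + p (m+2) * accP (n+3) ε (m+2) (m+1) :=
        stmt11_sum_Ico_three _ m
      have hz : ∑ i ∈ Finset.Ico 0 m, p i * accP (n+3) ε i (m+1) = 0 := by
        apply Finset.sum_eq_zero
        intro i hi
        simp only [Finset.mem_Ico] at hi
        rw [hacc_zero (m+1) i (by omega) (by omega) (by omega), mul_zero]
      have e1 : p m * accP (n+3) ε m (m+1) = x m := hacc_up m hm1 (by omega)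
      have e2 : accP (n+3) ε (m+1) (m+1) = Real.exp (-(((m+1:ℕ):ℝ)+2)*ε) :=
        hacc_self (m+1) (by omega) (by omega)
      have e3 : p (m+2) * accP (n+3) ε (m+2) (m+1) = 2 * x (m+2) :=
        hacc_down (m+1) (by omega)
      have e4 : ∑ i ∈ Finset.Ico (m+3) (n+4), p i * accP (n+3) ε i (m+1)
          = ∑ i ∈ Finset.Ico (m+3) (n+4), x i := by
        apply Finset.sum_congr rfl
        intro i hi
        simp only [Finset.mem_Ico] at hi
        exact hacc_tail (m+1) i (by omega) (by omega)
      rw [hsplit, hz, hthree, e1, e2, e3, e4] at h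
      have key : ((m:ℝ)+3) * x (m+1)
          = p (m+1) - p (m+1) * Real.exp (-(((m+1:ℕ):ℝ)+2)*ε) := by
        rw [hxdef (m+1)]
        have hne : ((m:ℝ)+1+2) ≠ 0 := by positivity
        push_cast
        field_simp
        ring
      linarith [h, key]
    -- balance at 0
    have hbal0 : p 0 = 2 * x 1 + ∑ i ∈ Finset.Ico 2 (n+4), x i := by
      have h := hp_inv 0 (by omega)
      have hsplit := stmt11_sum_split3 (fun i => p i * accP (n+3) ε i 0) 0 2 (n+4)
        (by omega) (by omega)
      rw [Finset.Ico_self, Finset.sum_empty] at hsplit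
      have htwo : ∑ i ∈ Finset.Ico 0 2, p i * accP (n+3) ε i 0
          = p 0 * accP (n+3) ε 0 0 + p 1 * accP (n+3) ε 1 0 :=
        stmt11_sum_Ico_two _ 0
      have e0 : accP (n+3) ε 0 0 = 0 := by
        unfold accP
        rw [if_pos rfl, if_neg (by omega)]
      have e1 : p 1 * accP (n+3) ε 1 0 = 2 * x 1 := hacc_down 0 (by omega)
      have e4 : ∑ i ∈ Finset.Ico 2 (n+4), p i * accP (n+3) ε i 0
          = ∑ i ∈ Finset.Ico 2 (n+4), x i := by
        apply Finset.sum_congr rfl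
        intro i hi
        simp only [Finset.mem_Ico] at hi
        exact hacc_tail 0 i (by omega) (by omega)
      rw [hsplit, htwo, e0, e1, e4] at h
      linarith [h]
    -- rewrite hAN1
    rw [show n+3-1 = n+2 from rfl] at hAN1
    rw [show n+3-2 = n+1 from rfl, show n+3-1 = n+2 from rfl] at hAN2
    -- A recursion, unified
    have hA : ∀ m : ℕ, 1 ≤ m → m ≤ n + 1 →
        A m = ((m:ℝ)+3) * A (m+1) - 2 * A (m+2) - ∑ i ∈ Finset.Ico (m+3) (n+4), A i := by
      intro m hm1 hm2
      rcases eq_or_lt_of_le hm2 with h | h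
      · subst h
        have hs : Finset.Ico (n+1+3) (n+4) = ∅ := Finset.Ico_eq_empty (by omega)
        rw [hs, Finset.sum_empty]
        push_cast at hAN2 ⊢
        linarith [hAN2]
      · have hrec := hArec (m+1) (by omega) (by omega)
        rw [show m+1-1 = m from rfl, show m+1+1 = m+2 from rfl, show m+1+2 = m+3 from rfl] at hrec
        have hset : Finset.Icc (m+3) (n+3) = Finset.Ico (m+3) (n+4) := by
          ext a; simp only [Finset.mem_Icc, Finset.mem_Ico]; omega
        rw [hset] at hrec
        push_cast at hrec ⊢
        linear_combination hrec
    -- downward induction : x m = A m * x N for 1 ≤ m ≤ N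
    have hxA : ∀ k m : ℕ, m + k = n + 3 → 1 ≤ m → x m = A m * x (n+3) := by
      intro k
      induction k using Nat.strong_induction_on with
      | _ k ih =>
        intro m hmk hm1
        rcases k with _ | _ | k'
        · have hm : m = n + 3 := by omega
          subst hm
          rw [hAN, one_mul]
        · have hm : m = n + 2 := by omega
          subst hm
          rw [hAN1, hxdef (n+2), hxdef (n+3)]
          rw [hxdef (n+2)] at hbalN
          push_cast at hbalN ⊢
          linear_combination -hbalN
        · have hb := hbal m hm1 (by omega)
          have ha := hA m hm1 (by omega)
          have ih1 : x (m+1) = A (m+1) * x (n+3) := ih (k'+1) (by omega) (m+1) (by omega) (by omega)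
          have ih2 : x (m+2) = A (m+2) * x (n+3) := ih k' (by omega) (m+2) (by omega) (by omega)
          have ihS : ∑ i ∈ Finset.Ico (m+3) (n+4), x i
              = (∑ i ∈ Finset.Ico (m+3) (n+4), A i) * x (n+3) := by
            rw [Finset.sum_mul]
            apply Finset.sum_congr rfl
            intro i hi
            simp only [Finset.mem_Ico] at hi
            exact ih (n+3-i) (by omega) i (by omega) (by omega)
          rw [hb, ha, ih1, ih2, ihS]
          ring
    -- conclusion
    intro i hi
    rcases Nat.eq_zero_or_pos i with hi0 | hi1
    · subst hi0
      have hx1 : x 1 = A 1 * x (n+3) := hxA (n+2) 1 (by omega) (by omega)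
      have hS : ∑ i ∈ Finset.Ico 2 (n+4), x i
          = (∑ i ∈ Finset.Ico 2 (n+4), A i) * x (n+3) := by
        rw [Finset.sum_mul]
        apply Finset.sum_congr rfl
        intro i hi
        simp only [Finset.mem_Ico] at hi
        exact hxA (n+3-i) i (by omega) (by omega)
      have hset : Finset.Icc 2 (n+3) = Finset.Ico 2 (n+4) := by
        ext a; simp only [Finset.mem_Icc, Finset.mem_Ico]; omega
      rw [hset] at hA0
      have hexp0 : Real.exp (-2*ε) = Real.exp (-(((0:ℕ):ℝ)+2)*ε) := by norm_num
      rw [hexp0] at hA0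
      have hp0 : p 0 = (2 * A 1 + ∑ i ∈ Finset.Ico 2 (n+4), A i) * x (n+3) := by
        rw [hbal0, hx1, hS]; ring
      have h1 : (1 - Real.exp (-(((0:ℕ):ℝ)+2)*ε)) ≠ 0 := ne_of_gt (he 0)
      have hASum : (2 * A 1 + ∑ i ∈ Finset.Ico 2 (n+4), A i) *
          (1 - Real.exp (-(((0:ℕ):ℝ)+2)*ε)) = 2 * A 0 := by
        rw [hA0]; ring
      have hdiv : (1 - Real.exp (-(((n+3:ℕ):ℝ)+2)*ε)) / (1 - Real.exp (-(((0:ℕ):ℝ)+2)*ε)) *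
          (1 - Real.exp (-(((0:ℕ):ℝ)+2)*ε)) = 1 - Real.exp (-(((n+3:ℕ):ℝ)+2)*ε) :=
        div_mul_cancel₀ _ h1
      apply mul_right_cancel₀ h1
      rw [hp0, hxdef (n+3)]
      linear_combination (p (n+3) * (1 - Real.exp (-(((n+3:ℕ):ℝ)+2)*ε)) / (((n+3:ℕ):ℝ)+2)) * hASum
        - (p (n+3) * A 0 * 2 / (((n+3:ℕ):ℝ)+2)) * hdiv
    · have hx := hxA (n+3-i) i (by omega) (by omega)
      have h1 : (1 - Real.exp (-((i:ℝ)+2)*ε)) ≠ 0 := ne_of_gt (he i)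
      have h2 : ((i:ℝ)+2) ≠ 0 := by positivity
      have hpi : p i = x i * ((i:ℝ)+2) / (1 - Real.exp (-((i:ℝ)+2)*ε)) := by
        rw [hxdef i, div_mul_cancel₀ _ h2, mul_div_cancel_right₀ _ h1]
      rw [hpi, hx, hxdef (n+3)]
      push_cast
      ring
end

section
/- Let (N_t) be a Poisson process with rate J > 0 and let (S_k) be an independent random walk with i.i.d. bounded increments of positive mean μ, with |increments| ≤ B. Define T_L = inf{t ≥ 0 : S_{N_t} ≥ L}. Then there exists C₂ > 0 such that E[T_L] ≤ C₂·L for all L ≥ 1. -/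
open MeasureTheory ProbabilityTheory Filter Finset Set
open scoped ENNReal NNReal Nat

/-!
Sample the clock on the grid `tₙ = 4n/J`. If `S_{N(tₙ)} ≥ L` then `T_L ≤ tₙ`, hence
`T_L ≤ (4/J) · #{n | S_{N(tₙ)} < L}` and `E[T_L] ≤ (4/J) ∑ₙ ℙ(S_{N(tₙ)} < L)`.
Since `N(tₙ)` is Poisson with mean `4n`, `ℙ(N(tₙ) < n) ≤ e⁻ⁿ`; by Hoeffding's inequality
`ℙ(S_k < L) ≤ qᵏ` for some `q < 1` as soon as `kμ ≥ 2L`. A union bound over the value of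
`N(tₙ)` bounds the `n`-th term by `e⁻ⁿ + qⁿ/(1 - q)` once `n ≥ 2L/μ`, and by `1` before, so
`E[T_L] ≤ (4/J)(2L/μ + 1 + D)` with `D` independent of `L`.
-/

lemma Real.sum_range_exp_neg_mul_pow_div_factorial_le {x : ℝ} (hx : 0 ≤ x) (K : ℕ) :
    ∑ j ∈ range K, Real.exp (-x) * x ^ j / j ! ≤ Real.exp (K - x / 2) := by
  have hpow (j : ℕ) (hj : j ∈ range K) : (2 : ℝ) ^ j ≤ Real.exp K :=
    calc (2 : ℝ) ^ j ≤ Real.exp 1 ^ j := by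
          gcongr; linarith [Real.add_one_le_exp 1]
      _ ≤ Real.exp K := by
          rw [← Real.exp_nat_mul, mul_one]; gcongr; exact (mem_range.1 hj).le
  calc ∑ j ∈ range K, Real.exp (-x) * x ^ j / j !
      = Real.exp (-x) * ∑ j ∈ range K, 2 ^ j * ((x / 2) ^ j / j !) := by
        rw [mul_sum]; refine sum_congr rfl fun j _ => ?_; rw [div_pow]; field_simp
    _ ≤ Real.exp (-x) * ∑ j ∈ range K, Real.exp K * ((x / 2) ^ j / j !) := by
        gcongr with j hj; exact hpow j hj
    _ ≤ Real.exp (-x) * (Real.exp K * Real.exp (x / 2)) := by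
        rw [← mul_sum]; gcongr; exact Real.sum_le_exp_of_nonneg (by positivity) K
    _ = Real.exp (K - x / 2) := by rw [← Real.exp_add, ← Real.exp_add]; ring_nf

lemma ENNReal.ofReal_sInf_le_mul_tsum_indicator (p : ℝ → Prop) {h : ℝ} (hh : 0 < h) :
    ENNReal.ofReal (sInf {t | 0 ≤ t ∧ p t})
      ≤ ENNReal.ofReal h * ∑' n : ℕ, {t | ¬ p t}.indicator 1 (n * h) := by
  classical
  by_cases hp : ∃ n : ℕ, p (n * h)
  · have hle : sInf {t | 0 ≤ t ∧ p t} ≤ Nat.find hp * h :=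
      csInf_le ⟨0, fun _ ht => ht.1⟩ ⟨by positivity, Nat.find_spec hp⟩
    have hbefore (n : ℕ) (hn : n ∈ range (Nat.find hp)) :
        {t | ¬ p t}.indicator (1 : ℝ → ℝ≥0∞) (n * h) = 1 :=
      indicator_of_mem (Nat.find_min hp (mem_range.1 hn)) 1
    calc ENNReal.ofReal (sInf {t | 0 ≤ t ∧ p t}) ≤ ENNReal.ofReal (Nat.find hp * h) :=
          ENNReal.ofReal_le_ofReal hle
      _ = ENNReal.ofReal h * ∑ n ∈ range (Nat.find hp), {t | ¬ p t}.indicator 1 (n * h) := by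
          rw [sum_congr rfl hbefore, ENNReal.ofReal_mul (Nat.cast_nonneg _)]
          simp [mul_comm]
      _ ≤ _ := by gcongr; exact ENNReal.sum_le_tsum _
  · push Not at hp
    have hall (n : ℕ) : {t | ¬ p t}.indicator (1 : ℝ → ℝ≥0∞) (n * h) = 1 :=
      indicator_of_mem (hp n) 1
    rw [tsum_congr hall, ENNReal.tsum_const_eq_top_of_ne_zero one_ne_zero,
      ENNReal.mul_top (ENNReal.ofReal_pos.2 hh).ne']
    exact le_top

lemma ENNReal.natCeil_mul_add_le_ofReal {a L : ℝ} (ha : 0 ≤ a) (hL : 1 ≤ L) {D : ℝ≥0∞}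
    (hD : D ≠ ⊤) : (⌈a * L⌉₊ : ℝ≥0∞) + D ≤ ENNReal.ofReal ((a + 1 + D.toReal) * L) := by
  have hceil := Nat.ceil_lt_add_one (by positivity : 0 ≤ a * L)
  calc (⌈a * L⌉₊ : ℝ≥0∞) + D = ENNReal.ofReal (⌈a * L⌉₊ + D.toReal) := by
        rw [ENNReal.ofReal_add (by positivity) ENNReal.toReal_nonneg, ENNReal.ofReal_natCast,
          ENNReal.ofReal_toReal hD]
    _ ≤ _ := ENNReal.ofReal_le_ofReal (by nlinarith [ENNReal.toReal_nonneg (a := D)])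

section

variable {Ω : Type*} [MeasurableSpace Ω] {μ : Measure Ω}

lemma lintegral_ofReal_sInf_le {Z : ℝ → Ω → ℝ} {L h : ℝ} (hh : 0 < h)
    (hZ : ∀ n : ℕ, Measurable (Z (n * h))) :
    ∫⁻ ω, ENNReal.ofReal (sInf {t | 0 ≤ t ∧ L ≤ Z t ω}) ∂μ
      ≤ ENNReal.ofReal h * ∑' n : ℕ, μ {ω | Z (n * h) ω < L} := by
  have hmeas (n : ℕ) : MeasurableSet {ω | Z (n * h) ω < L} :=
    measurableSet_lt (hZ n) measurable_const
  calc ∫⁻ ω, ENNReal.ofReal (sInf {t | 0 ≤ t ∧ L ≤ Z t ω}) ∂μ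
      ≤ ∫⁻ ω, ENNReal.ofReal h * ∑' n : ℕ, {ω | Z (n * h) ω < L}.indicator 1 ω ∂μ := by
        refine lintegral_mono fun ω => ?_
        convert ENNReal.ofReal_sInf_le_mul_tsum_indicator (fun t => L ≤ Z t ω) hh using 4 with n
        simp only [indicator_apply, mem_ofPred_eq, not_le, Pi.one_apply]
    _ = ENNReal.ofReal h * ∑' n : ℕ, μ {ω | Z (n * h) ω < L} := by
        rw [lintegral_const_mul' _ _ ENNReal.ofReal_ne_top,
          lintegral_tsum fun n => (measurable_one.indicator (hmeas n)).aemeasurable]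
        simp_rw [lintegral_indicator_one (hmeas _)]

lemma measurable_sum_range_comp {X : ℕ → Ω → ℝ} {M : Ω → ℕ} (hX : ∀ i, Measurable (X i))
    (hM : Measurable M) : Measurable fun ω => ∑ i ∈ range (M ω), X i ω := by
  have hsum : Measurable fun p : Ω × ℕ => ∑ i ∈ range p.2, X i p.1 :=
    measurable_from_prod_countable_left fun k => measurable_sum (range k) fun i _ => hX i
  exact hsum.comp (measurable_id.prodMk hM)

lemma measure_lt_le_of_poisson {N : Ω → ℕ} {x : ℝ} (hx : 0 ≤ x)
    (hlaw : ∀ n : ℕ, μ {ω | N ω = n} = ENNReal.ofReal (Real.exp (-x) * x ^ n / n !)) (K : ℕ) :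
    μ {ω | N ω < K} ≤ ENNReal.ofReal (Real.exp (K - x / 2)) :=
  calc μ {ω | N ω < K} = μ (⋃ j ∈ range K, {ω | N ω = j}) := by congr 1; ext; simp
    _ ≤ ∑ j ∈ range K, μ {ω | N ω = j} := measure_biUnion_finset_le _ _
    _ = ENNReal.ofReal (∑ j ∈ range K, Real.exp (-x) * x ^ j / j !) := by
        rw [ENNReal.ofReal_sum_of_nonneg fun j _ => by positivity]; simp_rw [hlaw]
    _ ≤ _ := ENNReal.ofReal_le_ofReal (Real.sum_range_exp_neg_mul_pow_div_factorial_le hx K)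

lemma measure_comp_lt_le (M : Ω → ℕ) (S : ℕ → Ω → ℝ) (L : ℝ) (K : ℕ) :
    μ {ω | S (M ω) ω < L} ≤ μ {ω | M ω < K} + ∑' m : ℕ, μ {ω | S (K + m) ω < L} := by
  calc μ {ω | S (M ω) ω < L} ≤ μ ({ω | M ω < K} ∪ ⋃ m : ℕ, {ω | S (K + m) ω < L}) := by
        refine measure_mono fun ω hω => ?_
        by_cases hM : M ω < K
        · exact Or.inl hM
        · refine Or.inr (mem_iUnion.2 ⟨M ω - K, ?_⟩)
          simpa [Nat.add_sub_cancel' (not_lt.1 hM)] using hω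
    _ ≤ _ := (measure_union_le _ _).trans (by gcongr; exact measure_iUnion_le _)

lemma tsum_measure_comp_lt_le [IsProbabilityMeasure μ] (M : ℕ → Ω → ℕ) (S : ℕ → Ω → ℝ)
    (L : ℝ) {n₀ : ℕ} {p q : ℝ≥0∞} (hM : ∀ n : ℕ, μ {ω | M n ω < n} ≤ p ^ n)
    (hS : ∀ k : ℕ, n₀ ≤ k → μ {ω | S k ω < L} ≤ q ^ k) :
    ∑' n : ℕ, μ {ω | S (M n ω) ω < L} ≤ n₀ + ((1 - p)⁻¹ + (1 - q)⁻¹ * (1 - q)⁻¹) := by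
  have hlate (n : ℕ) (hn : n₀ ≤ n) : μ {ω | S (M n ω) ω < L} ≤ p ^ n + q ^ n * (1 - q)⁻¹ :=
    calc μ {ω | S (M n ω) ω < L} ≤ μ {ω | M n ω < n} + ∑' m : ℕ, μ {ω | S (n + m) ω < L} :=
          measure_comp_lt_le (M n) S L n
      _ ≤ p ^ n + ∑' m : ℕ, q ^ n * q ^ m := by
          gcongr with m
          · exact hM n
          · rw [← pow_add]; exact hS _ (hn.trans (Nat.le_add_right n m))
      _ = p ^ n + q ^ n * (1 - q)⁻¹ := by rw [ENNReal.tsum_mul_left, ENNReal.tsum_geometric]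
  have hall (n : ℕ) : μ {ω | S (M n ω) ω < L}
      ≤ (if n < n₀ then 1 else 0) + (p ^ n + q ^ n * (1 - q)⁻¹) := by
    split_ifs with hn
    · exact prob_le_one.trans le_self_add
    · rw [zero_add]; exact hlate n (not_lt.1 hn)
  calc ∑' n : ℕ, μ {ω | S (M n ω) ω < L}
      ≤ ∑' n : ℕ, ((if n < n₀ then 1 else 0) + (p ^ n + q ^ n * (1 - q)⁻¹)) :=
        ENNReal.tsum_le_tsum hall
    _ = n₀ + ((1 - p)⁻¹ + (1 - q)⁻¹ * (1 - q)⁻¹) := by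
        rw [ENNReal.tsum_add, ENNReal.tsum_add, ENNReal.tsum_mul_right, ENNReal.tsum_geometric,
          ENNReal.tsum_geometric, tsum_eq_sum (s := range n₀) (by simp_all)]
        simp [filter_true_of_mem fun _ => mem_range.1]

lemma measureReal_sum_range_le_le_pow {X : ℕ → Ω → ℝ} (hindep : iIndepFun X μ) {c : ℝ≥0}
    {m : ℝ} (hm : 0 ≤ m) (hsubG : ∀ i, HasSubgaussianMGF (fun ω => X i ω - m) c μ) {k : ℕ}
    {L : ℝ} (hL : 2 * L ≤ k * m) :
    μ.real {ω | ∑ i ∈ range k, X i ω ≤ L} ≤ Real.exp (-(m ^ 2 / (8 * c))) ^ k := by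
  have hY : iIndepFun (fun i ω => m - X i ω) μ :=
    hindep.comp (fun _ x => m - x) fun _ => measurable_const.sub measurable_id
  have hsubY (i : ℕ) (_ : i < k) : HasSubgaussianMGF (fun ω => m - X i ω) c μ := by
    simpa [Pi.neg_def] using (hsubG i).neg
  have hset : {ω | ∑ i ∈ range k, X i ω ≤ L}
      = {ω | k * m - L ≤ ∑ i ∈ range k, (m - X i ω)} := by
    ext ω
    simp only [mem_ofPred_eq, sum_sub_distrib, sum_const, card_range, nsmul_eq_mul]
    constructor <;> intro <;> linarith
  have hε : 0 ≤ k * m - L := by linarith [mul_nonneg k.cast_nonneg hm]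
  rw [hset, ← Real.exp_nat_mul]
  refine (HasSubgaussianMGF.measure_sum_range_ge_le_of_iIndepFun hY hsubY hε).trans
    (Real.exp_le_exp.2 ?_)
  rcases (Nat.cast_nonneg k : (0 : ℝ) ≤ k).eq_or_lt with hk | hk
  · simp [← hk]
  rcases c.coe_nonneg.eq_or_lt with hc | hc
  · simp [← hc]
  rw [mul_neg, neg_div, neg_le_neg_iff, le_div_iff₀ (by positivity)]
  have : k * m / 2 ≤ k * m - L := by linarith
  calc k * (m ^ 2 / (8 * c)) * (2 * k * c) = (k * m / 2) ^ 2 := by field_simp; ring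
    _ ≤ (k * m - L) ^ 2 := by gcongr

lemma exists_measure_sum_range_lt_le_pow [IsProbabilityMeasure μ] {X : ℕ → Ω → ℝ} {B m : ℝ}
    (hm : 0 < m) (hmeas : ∀ i, Measurable (X i)) (hindep : iIndepFun X μ)
    (hident : ∀ i, Measure.map (X i) μ = Measure.map (X 0) μ) (hbound : ∀ i ω, |X i ω| ≤ B)
    (hmean : ∫ ω, X 0 ω ∂μ = m) :
    ∃ q < 1, ∀ (k : ℕ) (L : ℝ), 2 * L ≤ k * m → μ {ω | ∑ i ∈ range k, X i ω < L} ≤ q ^ k := by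
  set c : ℝ≥0 := (‖B - -B‖₊ / 2) ^ 2
  have hsubG (i : ℕ) : HasSubgaussianMGF (fun ω => X i ω - m) c μ := by
    have hmean_i : μ[X i] = m :=
      (IdentDistrib.integral_eq ⟨(hmeas i).aemeasurable, (hmeas 0).aemeasurable, hident i⟩).trans
        hmean
    rw [← hmean_i]
    exact hasSubgaussianMGF_of_mem_Icc (hmeas i).aemeasurable
      (ae_of_all _ fun ω => abs_le.1 (hbound i ω))
  have hB : m ≤ B := by
    have h := norm_integral_le_of_norm_le_const (μ := μ) (f := X 0) (ae_of_all μ (hbound 0))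
    simp only [hmean, Real.norm_eq_abs, probReal_univ, mul_one] at h
    exact (le_abs_self m).trans h
  have hc : 0 < (c : ℝ) := by
    simp only [c, NNReal.coe_pow, NNReal.coe_div, coe_nnnorm, Real.norm_eq_abs]
    exact pow_pos (div_pos (abs_pos.2 (by linarith)) two_pos) 2
  refine ⟨ENNReal.ofReal (Real.exp (-(m ^ 2 / (8 * c)))),
    ENNReal.ofReal_lt_one.2 (Real.exp_lt_one_iff.2 (by simp only [neg_lt_zero]; positivity)),
    fun k L hL => ?_⟩
  calc μ {ω | ∑ i ∈ range k, X i ω < L} ≤ μ {ω | ∑ i ∈ range k, X i ω ≤ L} :=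
        measure_mono fun _ hω => (show _ < L from hω).le
    _ = ENNReal.ofReal (μ.real {ω | ∑ i ∈ range k, X i ω ≤ L}) :=
        (ofReal_measureReal (measure_ne_top _ _)).symm
    _ ≤ _ := by
        rw [← ENNReal.ofReal_pow (Real.exp_nonneg _)]
        exact ENNReal.ofReal_le_ofReal (measureReal_sum_range_le_le_pow hindep hm.le hsubG hL)

end

theorem stmt15_general {Ω : Type*} [MeasureSpace Ω] [IsProbabilityMeasure (ℙ : Measure Ω)]
    (J B μ : ℝ) (hJ : 0 < J) (hμ : 0 < μ)
    (N : ℝ → Ω → ℕ)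
    (hNmeas : ∀ t, Measurable (N t))
    (hNlaw : ∀ t : ℝ, 0 ≤ t → ∀ n : ℕ,
      ℙ {ω | N t ω = n} = ENNReal.ofReal (Real.exp (-J * t) * (J * t) ^ n / n.factorial))
    (X : ℕ → Ω → ℝ)
    (hXmeas : ∀ i, Measurable (X i))
    (hXindep : iIndepFun X ℙ)
    (hXident : ∀ i, Measure.map (X i) ℙ = Measure.map (X 0) ℙ)
    (hXbound : ∀ i ω, |X i ω| ≤ B)
    (hXmean : ∫ ω, X 0 ω ∂ℙ = μ) :
    ∃ C₂ : ℝ, 0 < C₂ ∧ ∀ L : ℝ, 1 ≤ L →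
      (∫⁻ ω, ENNReal.ofReal
          (sInf {t : ℝ | 0 ≤ t ∧ L ≤ ∑ i ∈ Finset.range (N t ω), X i ω}) ∂ℙ)
        ≤ ENNReal.ofReal (C₂ * L) := by
  obtain ⟨q, hq, hwalk⟩ :=
    exists_measure_sum_range_lt_le_pow hμ hXmeas hXindep hXident hXbound hXmean
  set p : ℝ≥0∞ := ENNReal.ofReal (Real.exp (-1))
  have hp : p < 1 := ENNReal.ofReal_lt_one.2 (Real.exp_lt_one_iff.2 (by norm_num))
  have hclock (n : ℕ) : ℙ {ω | N (n * (4 / J)) ω < n} ≤ p ^ n := by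
    have hlaw := hNlaw (n * (4 / J)) (by positivity)
    simp only [neg_mul] at hlaw
    convert measure_lt_le_of_poisson (by positivity) hlaw n using 1
    rw [← ENNReal.ofReal_pow (Real.exp_nonneg _), ← Real.exp_nat_mul]
    field_simp
    ring_nf
  set D : ℝ≥0∞ := (1 - p)⁻¹ + (1 - q)⁻¹ * (1 - q)⁻¹
  have hD : D ≠ ⊤ := by
    simp [D, ENNReal.mul_ne_top, tsub_eq_zero_iff_le, hp.not_ge, hq.not_ge]
  refine ⟨4 / J * (2 / μ + 1 + D.toReal), by positivity, fun L hL => ?_⟩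
  calc _ ≤ ENNReal.ofReal (4 / J)
        * ∑' n : ℕ, ℙ {ω | ∑ i ∈ range (N (n * (4 / J)) ω), X i ω < L} :=
        lintegral_ofReal_sInf_le (by positivity) fun _ =>
          measurable_sum_range_comp hXmeas (hNmeas _)
    _ ≤ ENNReal.ofReal (4 / J) * (⌈2 / μ * L⌉₊ + D) := by
        gcongr
        refine tsum_measure_comp_lt_le _ (fun k ω => ∑ i ∈ range k, X i ω) L hclock fun k hk => ?_
        refine hwalk k L ?_
        rw [← div_le_iff₀ hμ, mul_div_right_comm]
        exact Nat.ceil_le.1 hk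
    _ ≤ ENNReal.ofReal (4 / J) * ENNReal.ofReal ((2 / μ + 1 + D.toReal) * L) := by
        gcongr
        exact ENNReal.natCeil_mul_add_le_ofReal (by positivity) hL hD
    _ = ENNReal.ofReal (4 / J * (2 / μ + 1 + D.toReal) * L) := by
        rw [mul_assoc, ENNReal.ofReal_mul (p := 4 / J) (by positivity)]

/-- Let `(N_t)` be a Poisson process with rate `J > 0` (monotone integer-valued paths with
Poisson marginals) and let `(S_k)` be an independent random walk with i.i.d. bounded increments
of positive mean `μ`, `|increments| ≤ B`.  Define `T_L = inf {t ≥ 0 : S_{N_t} ≥ L}`.  Then there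
exists `C₂ > 0` such that `E[T_L] ≤ C₂ L` for all `L ≥ 1`. -/
theorem stmt15 {Ω : Type*} [MeasureSpace Ω] [IsProbabilityMeasure (ℙ : Measure Ω)]
    (J B μ : ℝ) (hJ : 0 < J) (hμ : 0 < μ)
    (N : ℝ → Ω → ℕ)
    (hNmeas : ∀ t, Measurable (N t))
    (hNmono : ∀ ω, Monotone fun t => N t ω)
    (hN0 : ∀ ω, N 0 ω = 0)
    (hNlaw : ∀ t : ℝ, 0 ≤ t → ∀ n : ℕ,
      ℙ {ω | N t ω = n} = ENNReal.ofReal (Real.exp (-J * t) * (J * t) ^ n / n.factorial))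
    (X : ℕ → Ω → ℝ)
    (hXmeas : ∀ i, Measurable (X i))
    (hXindep : iIndepFun X ℙ)
    (hXident : ∀ i, Measure.map (X i) ℙ = Measure.map (X 0) ℙ)
    (hXbound : ∀ i ω, |X i ω| ≤ B)
    (hXmean : ∫ ω, X 0 ω ∂ℙ = μ)
    -- the Poisson process and the random walk increments are independent
    (hNX : IndepFun (fun ω => fun t : ℝ => N t ω) (fun ω => fun i : ℕ => X i ω) ℙ) :
    ∃ C₂ : ℝ, 0 < C₂ ∧ ∀ L : ℝ, 1 ≤ L →
      (∫⁻ ω, ENNReal.ofReal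
          (sInf {t : ℝ | 0 ≤ t ∧ L ≤ ∑ i ∈ Finset.range (N t ω), X i ω}) ∂ℙ)
        ≤ ENNReal.ofReal (C₂ * L) :=
  stmt15_general J B μ hJ hμ N hNmeas hNlaw X hXmeas hXindep hXident hXbound hXmean
end
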